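/- On the flat Euclidean space ℝ^{n+1} with coordinates (x₁,…,x_{n+1}) and r = x_{n+1} > 0, the operator L(λ) = (n+2λ-1)∂_{n+1} - x_{n+1} Δ_{ℝ^{n+1}} satisfies the conjugation identity L(λ)u = r^{λ-1}(-Δ_{g₊} + λ(n+λ))(r^{-λ}u) for all smooth u on the upper half-space, where g₊ = r^{-2}Σ dx_i² is the hyperbolic metric and Δ_{g₊} = r² Δ_{ℝ^{n+1}} - (n-1) r ∂_{n+1}. -/

import Mathlib

/-- Partial derivative in the `i`-th coordinate direction on `ℝ^m`. -/
noncomputable def pderiv' (m : ℕ) (i : Fin m) (f : (Fin m → ℝ) → ℝ) (x : Fin m → ℝ) : ℝ :=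
  fderiv ℝ f x (Pi.single i 1)

/-- The Euclidean Laplacian `Δ_{ℝ^m} = ∑ ∂_i²`. -/
noncomputable def eucLaplacian (m : ℕ) (f : (Fin m → ℝ) → ℝ) (x : Fin m → ℝ) : ℝ :=
  ∑ i, pderiv' m i (pderiv' m i f) x

/-- The flat-case Laplace–Robin operator `L(λ) = (n+2λ-1)∂_{n+1} - x_{n+1} Δ_{ℝ^{n+1}}`. -/
noncomputable def flatLaplaceRobin (n : ℕ) (lam : ℝ) (u : (Fin (n + 1) → ℝ) → ℝ)
    (x : Fin (n + 1) → ℝ) : ℝ :=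
  ((n : ℝ) + 2 * lam - 1) * pderiv' (n + 1) (Fin.last n) u x - x (Fin.last n) * eucLaplacian (n + 1) u x

/-- The hyperbolic Laplacian of `g₊ = r^{-2} Σ dx_i²` on the upper half-space:
`Δ_{g₊} v = r² Δ_{ℝ^{n+1}} v - (n-1) r ∂_{n+1} v`, with `r = x_{n+1}`. -/
noncomputable def hypLaplacian (n : ℕ) (v : (Fin (n + 1) → ℝ) → ℝ) (x : Fin (n + 1) → ℝ) : ℝ :=
  (x (Fin.last n)) ^ 2 * eucLaplacian (n + 1) v x
    - ((n : ℝ) - 1) * x (Fin.last n) * pderiv' (n + 1) (Fin.last n) v x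

lemma hasFDerivAt_rpow_last (n : ℕ) (c : ℝ) (y : Fin (n+1) → ℝ) (hy : 0 < y (Fin.last n)) :
    HasFDerivAt (fun z : Fin (n+1) → ℝ => (z (Fin.last n)) ^ c)
      ((c * (y (Fin.last n)) ^ (c - 1)) •
        ContinuousLinearMap.proj (R := ℝ) (φ := fun _ : Fin (n+1) => ℝ) (Fin.last n)) y := by
  have h1 : HasDerivAt (fun t : ℝ => t ^ c) (c * (y (Fin.last n)) ^ (c-1)) (y (Fin.last n)) :=
    Real.hasDerivAt_rpow_const (Or.inl hy.ne')
  have h2 : HasFDerivAt (fun z : Fin (n+1) → ℝ => z (Fin.last n))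
      (ContinuousLinearMap.proj (R := ℝ) (φ := fun _ : Fin (n+1) => ℝ) (Fin.last n)) y := by
    exact hasFDerivAt_apply (Fin.last n) y
  exact h1.comp_hasFDerivAt y h2

lemma pderiv_rpow_mul (n : ℕ) (c : ℝ) (w : (Fin (n+1) → ℝ) → ℝ) (y : Fin (n+1) → ℝ)
    (hy : 0 < y (Fin.last n)) (hw : DifferentiableAt ℝ w y) (i : Fin (n+1)) :
    pderiv' (n+1) i (fun z => (z (Fin.last n)) ^ c * w z) y
      = c * (y (Fin.last n)) ^ (c-1) * w y * ((Pi.single i 1 : Fin (n+1) → ℝ) (Fin.last n))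
        + (y (Fin.last n)) ^ c * pderiv' (n+1) i w y := by
  have hr := hasFDerivAt_rpow_last n c y hy
  have h := hr.mul hw.hasFDerivAt
  rw [pderiv', HasFDerivAt.fderiv (f := fun z => (z (Fin.last n)) ^ c * w z) h]
  simp [pderiv', smul_eq_mul]
  ring

lemma isOpen_upper (n : ℕ) : IsOpen {y : Fin (n+1) → ℝ | 0 < y (Fin.last n)} :=
  isOpen_lt continuous_const (continuous_apply (Fin.last n))

lemma contDiffOn_pderiv (n : ℕ) (i : Fin (n+1)) (f : (Fin (n+1) → ℝ) → ℝ)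
    (hf : ContDiffOn ℝ (⊤ : ℕ∞) f {y | 0 < y (Fin.last n)}) :
    ContDiffOn ℝ (⊤ : ℕ∞) (pderiv' (n+1) i f) {y | 0 < y (Fin.last n)} := by
  have h1 : ContDiffOn ℝ (⊤ : ℕ∞) (fun y => fderiv ℝ f y) {y : Fin (n+1) → ℝ | 0 < y (Fin.last n)} :=
    hf.fderiv_of_isOpen (isOpen_upper n) (by simp)
  exact h1.clm_apply contDiffOn_const

lemma diffAt_of_contDiffOn (n : ℕ) (f : (Fin (n+1) → ℝ) → ℝ)
    (hf : ContDiffOn ℝ (⊤ : ℕ∞) f {y | 0 < y (Fin.last n)}) (y : Fin (n+1) → ℝ)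
    (hy : 0 < y (Fin.last n)) : DifferentiableAt ℝ f y :=
  (hf.differentiableOn (by simp)).differentiableAt ((isOpen_upper n).mem_nhds hy)

/-- On flat `ℝ^{n+1}` with `r = x_{n+1} > 0`, the operator
`L(λ) = (n+2λ-1)∂_{n+1} - x_{n+1}Δ` satisfies the conjugation identity
`L(λ)u = r^{λ-1}(-Δ_{g₊} + λ(n+λ))(r^{-λ}u)` for all smooth `u` on the upper half-space. -/
theorem flat_conjugation_formula (n : ℕ) (lam : ℝ)
    (u : (Fin (n + 1) → ℝ) → ℝ)
    (hu : ContDiffOn ℝ (⊤ : ℕ∞) u {y | 0 < y (Fin.last n)})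
    (x : Fin (n + 1) → ℝ) (hx : 0 < x (Fin.last n)) :
    flatLaplaceRobin n lam u x
      = (x (Fin.last n)) ^ (lam - 1) *
          (-(hypLaplacian n (fun y => (y (Fin.last n)) ^ (-lam) * u y) x)
            + lam * ((n : ℝ) + lam) * ((x (Fin.last n)) ^ (-lam) * u x)) := by
  have hU : IsOpen {y : Fin (n+1) → ℝ | 0 < y (Fin.last n)} := isOpen_upper n
  set L := Fin.last n with hLdef
  set v : (Fin (n+1) → ℝ) → ℝ := fun y => (y L) ^ (-lam) * u y with hvdef
  have hdu : ∀ y : Fin (n+1) → ℝ, 0 < y L → DifferentiableAt ℝ u y :=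
    fun y hy => diffAt_of_contDiffOn n u hu y hy
  have hdw : ∀ (i : Fin (n+1)) (y : Fin (n+1) → ℝ), 0 < y L →
      DifferentiableAt ℝ (pderiv' (n+1) i u) y :=
    fun i y hy => diffAt_of_contDiffOn n _ (contDiffOn_pderiv n i u hu) y hy
  -- the rearranged first-derivative formula
  have hv1 : ∀ (i : Fin (n+1)) (y : Fin (n+1) → ℝ), 0 < y L →
      pderiv' (n+1) i v y
        = ((-lam) * ((Pi.single i 1 : Fin (n+1) → ℝ) L)) * ((y L)^(-lam-1) * u y)
          + (y L)^(-lam) * pderiv' (n+1) i u y := by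
    intro i y hy
    rw [hvdef]
    rw [pderiv_rpow_mul n (-lam) u y hy (hdu y hy) i]
    ring
  -- second derivatives
  have hv2 : ∀ i : Fin (n+1),
      pderiv' (n+1) i (pderiv' (n+1) i v) x
        = lam*(lam+1)*(x L)^(-lam-2)*u x*((Pi.single i 1 : Fin (n+1) → ℝ) L)^2
          - 2*lam*(x L)^(-lam-1)*(pderiv' (n+1) i u x)*((Pi.single i 1 : Fin (n+1) → ℝ) L)
          + (x L)^(-lam)*pderiv' (n+1) i (pderiv' (n+1) i u) x := by
    intro i
    set d : ℝ := (Pi.single i 1 : Fin (n+1) → ℝ) L with hddef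
    have hev : pderiv' (n+1) i v =ᶠ[nhds x]
        (fun y => ((-lam) * d) * ((y L)^(-lam-1) * u y) + (y L)^(-lam) * pderiv' (n+1) i u y) :=
      Filter.eventuallyEq_of_mem (hU.mem_nhds hx) (fun y hy => hv1 i y hy)
    have hA := (hasFDerivAt_rpow_last n (-lam-1) x hx).mul (hdu x hx).hasFDerivAt
    have hB := (hasFDerivAt_rpow_last n (-lam) x hx).mul (hdw i x hx).hasFDerivAt
    have hg := (hA.const_mul ((-lam) * d)).add hB
    have hfd : fderiv ℝ (pderiv' (n+1) i v) x
        = fderiv ℝ (fun y => ((-lam) * d) * ((y L)^(-lam-1) * u y)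
            + (y L)^(-lam) * pderiv' (n+1) i u y) x := hev.fderiv_eq
    rw [show pderiv' (n+1) i (pderiv' (n+1) i v) x
        = (fderiv ℝ (pderiv' (n+1) i v) x) (Pi.single i 1) from rfl, hfd, HasFDerivAt.fderiv (f := fun y => ((-lam) * d) * ((y L)^(-lam-1) * u y)
            + (y L)^(-lam) * pderiv' (n+1) i u y) hg]
    simp [pderiv', smul_eq_mul]
    rw [show (-lam - 1 - 1 : ℝ) = -lam - 2 by ring, show (-lam - 1 : ℝ) = -lam - 1 from rfl]
    ring
  -- delta values
  have hδL : ((Pi.single L 1 : Fin (n+1) → ℝ) L) = 1 := Pi.single_eq_same L 1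
  have hδ : ∀ i : Fin n, ((Pi.single i.castSucc 1 : Fin (n+1) → ℝ) L) = 0 :=
    fun i => Pi.single_eq_of_ne (Fin.castSucc_lt_last i).ne' 1
  -- Laplacian of v
  have hE : eucLaplacian (n+1) v x
      = (x L)^(-lam) * eucLaplacian (n+1) u x
        - 2*lam*(x L)^(-lam-1)*pderiv' (n+1) L u x
        + lam*(lam+1)*(x L)^(-lam-2)*u x := by
    unfold eucLaplacian
    rw [Fin.sum_univ_castSucc (f := fun i => pderiv' (n+1) i (pderiv' (n+1) i v) x),
        Fin.sum_univ_castSucc (f := fun i => pderiv' (n+1) i (pderiv' (n+1) i u) x)]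
    simp only [hv2, ← hLdef, hδL, hδ]
    ring_nf
    rw [Finset.mul_sum]
  have hPv : pderiv' (n+1) L v x
      = -lam*(x L)^(-lam-1)*u x + (x L)^(-lam)*pderiv' (n+1) L u x := by
    rw [hv1 L x hx, hδL]; ring
  -- final algebra
  rw [flatLaplaceRobin, hypLaplacian, hE, hPv]
  set R := x L with hRdef
  have hR : (0:ℝ) < R := hx
  have hRne : R ≠ 0 := hR.ne'
  have hPne : R ^ lam ≠ 0 := (Real.rpow_pos_of_pos hR lam).ne'
  have e1 : R ^ (lam - 1) = R ^ lam / R := by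
    rw [Real.rpow_sub hR, Real.rpow_one]
  have e2 : R ^ (-lam) = (R ^ lam)⁻¹ := by
    rw [Real.rpow_neg hR.le]
  have e3 : R ^ (-lam - 1) = (R ^ lam * R)⁻¹ := by
    rw [show (-lam - 1 : ℝ) = -(lam + 1) by ring, Real.rpow_neg hR.le,
      Real.rpow_add hR, Real.rpow_one]
  have e4 : R ^ (-lam - 2) = (R ^ lam * R ^ 2)⁻¹ := by
    rw [show (-lam - 2 : ℝ) = -(lam + 2) by ring, Real.rpow_neg hR.le,
      Real.rpow_add hR, show ((2:ℝ):ℝ) = ((2:ℕ):ℝ) by norm_num, Real.rpow_natCast]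
  rw [e1, e2, e3, e4]
  field_simp
  ring
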